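/- arXiv:2002.08513 — 5 statements merged into one kernel-verified Lean document; each statement's English description precedes it below -/
import Mathlib

section
/- For ψ = f + φ with f continuously differentiable and φ convex real-valued, the vector ψ'(x; d_s(x))·d_s(x) belongs to ∂ψ(x), where d_s(x) is the steepest descent direction (equal to 0 when 0 ∈ ∂ψ(x)). -/
/-!
The subdifferential `S = ∇f(x) + ∂φ(x)` is nonempty, closed and convex, so it has a point `v` of
minimal norm, characterised by `‖v‖² ≤ ⟪v, w⟫` for all `w ∈ S`. Hence the support function
`σ(d) = sup_{w ∈ S} ⟪w, d⟫` equals `-‖v‖` at `-v/‖v‖`, while `σ(d) ≥ ⟪v, d⟫ ≥ -‖v‖` for `‖d‖ ≤ 1`.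
A minimiser `d` over the unit ball therefore has `⟪v, d⟫ = -‖v‖`, which forces `‖v‖ • d = -v`,
and so `σ(d) • d = v ∈ S`.
-/

open scoped RealInnerProductSpace

/-- The convex subdifferential of a real-valued function. -/
def subdiff {n : ℕ} (φ : EuclideanSpace ℝ (Fin n) → ℝ) (x : EuclideanSpace ℝ (Fin n)) :
    Set (EuclideanSpace ℝ (Fin n)) :=
  {v | ∀ y, φ x + ⟪v, y - x⟫ ≤ φ y}

section Subgradient

variable {E : Type*} [NormedAddCommGroup E] [NormedSpace ℝ E] {φ : E → ℝ}

/-- Obtained by separating `(x, φ x)` from the open strict epigraph of `φ`. -/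
theorem ConvexOn.exists_clm_le_sub (hφ : ConvexOn ℝ Set.univ φ) (hcont : Continuous φ) (x : E) :
    ∃ g : E →L[ℝ] ℝ, ∀ y, g (y - x) ≤ φ y - φ x := by
  set s : Set (E × ℝ) := {p | φ p.1 < p.2}
  have hs_open : IsOpen s := isOpen_lt (hcont.comp continuous_fst) continuous_snd
  have hs_conv : Convex ℝ s := by simpa using hφ.convex_strict_epigraph
  obtain ⟨L, hL⟩ := geometric_hahn_banach_point_open hs_conv hs_open
    (show (x, φ x) ∉ s from lt_irrefl (φ x))
  set c := L (0, 1)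
  have hL_apply : ∀ y t, L (y, t) = L (y, 0) + t * c := fun y t => by
    rw [← smul_eq_mul, ← map_smul, ← map_add]
    simp
  have hc : 0 < c := by
    have := hL (x, φ x + 1) (by simp [s])
    rw [hL_apply x (φ x), hL_apply x (φ x + 1)] at this
    linarith
  have hsupp : ∀ y, L (x, 0) + c * φ x ≤ L (y, 0) + c * φ y := fun y =>
    le_of_forall_pos_lt_add fun ε hε => by
      have := hL (y, φ y + ε / c) (by simpa [s] using div_pos hε hc)
      rw [hL_apply x (φ x), hL_apply y (φ y + ε / c), add_mul, div_mul_cancel₀ ε hc.ne'] at this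
      linarith
  refine ⟨-c⁻¹ • L.comp (ContinuousLinearMap.inl ℝ E ℝ), fun y => ?_⟩
  have hLsub : L (y - x, 0) = L (y, 0) - L (x, 0) := by
    rw [← map_sub, Prod.mk_sub_mk, sub_zero]
  simp only [smul_apply, ContinuousLinearMap.comp_apply, ContinuousLinearMap.inl_apply, hLsub,
    smul_eq_mul]
  rw [← mul_le_mul_iff_right₀ hc]
  field_simp
  linarith [hsupp y]

end Subgradient

section Subdiff

variable {n : ℕ}

theorem subdiff_nonempty {φ : EuclideanSpace ℝ (Fin n) → ℝ} (hφ : ConvexOn ℝ Set.univ φ)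
    (x : EuclideanSpace ℝ (Fin n)) : (subdiff φ x).Nonempty := by
  have hcont : Continuous φ := continuousOn_univ.1 (hφ.continuousOn isOpen_univ)
  obtain ⟨g, hg⟩ := hφ.exists_clm_le_sub hcont x
  refine ⟨(InnerProductSpace.toDual ℝ _).symm g, fun y => ?_⟩
  rw [InnerProductSpace.toDual_symm_apply]
  linarith [hg y]

theorem isClosed_subdiff (φ : EuclideanSpace ℝ (Fin n) → ℝ) (x : EuclideanSpace ℝ (Fin n)) :
    IsClosed (subdiff φ x) := by
  simp only [subdiff, Set.ofPred_forall]
  exact isClosed_iInter fun y => isClosed_le (by fun_prop) continuous_const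

theorem convex_subdiff (φ : EuclideanSpace ℝ (Fin n) → ℝ) (x : EuclideanSpace ℝ (Fin n)) :
    Convex ℝ (subdiff φ x) := by
  simp only [subdiff, Set.ofPred_forall, ← le_sub_iff_add_le']
  exact convex_iInter fun y => convex_halfSpace_le
    ⟨fun u w => inner_add_left u w _, fun a u => real_inner_smul_left u _ a⟩ _

theorem inner_le_of_mem_subdiff {φ : EuclideanSpace ℝ (Fin n) → ℝ} {x v : EuclideanSpace ℝ (Fin n)}
    (hv : v ∈ subdiff φ x) (d : EuclideanSpace ℝ (Fin n)) : ⟪v, d⟫ ≤ φ (x + d) - φ x := by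
  have := hv (x + d)
  rw [add_sub_cancel_left] at this
  linarith

end Subdiff

section SupportFunction

variable {E : Type*} [NormedAddCommGroup E] [InnerProductSpace ℝ E]

/-- Takes the junk value `0` in directions `d` along which `⟪·, d⟫` is unbounded above on `S`. -/
noncomputable def supportFun (S : Set E) (d : E) : ℝ :=
  sSup ((fun v => ⟪v, d⟫) '' S)

theorem exists_mem_forall_norm_sq_le_inner {S : Set E} (hne : S.Nonempty) (hc : IsComplete S)
    (hconv : Convex ℝ S) : ∃ v ∈ S, ∀ w ∈ S, ‖v‖ ^ 2 ≤ ⟪v, w⟫ := by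
  obtain ⟨v, hvS, hmin⟩ := exists_norm_eq_iInf_of_complete_convex hne hc hconv 0
  refine ⟨v, hvS, fun w hw => ?_⟩
  have := (norm_eq_iInf_iff_real_inner_le_zero hconv hvS).1 hmin w hw
  rw [zero_sub, inner_neg_left, inner_sub_right, real_inner_self_eq_norm_sq] at this
  linarith

theorem supportFun_neg_inv_norm_smul {S : Set E} {v : E} (hvS : v ∈ S)
    (hv : ∀ w ∈ S, ‖v‖ ^ 2 ≤ ⟪v, w⟫) : supportFun S (-‖v‖⁻¹ • v) = -‖v‖ := by
  have hinner : ∀ w, ⟪w, -‖v‖⁻¹ • v⟫ = -(‖v‖⁻¹ * ⟪v, w⟫) := fun w => by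
    rw [real_inner_smul_right, real_inner_comm, neg_mul]
  have hnorm : ‖v‖⁻¹ * ‖v‖ ^ 2 = ‖v‖ := by rw [sq, ← mul_assoc, inv_mul_mul_self]
  refine IsGreatest.csSup_eq ⟨⟨v, hvS, ?_⟩, ?_⟩
  · dsimp only
    rw [hinner, real_inner_self_eq_norm_sq, hnorm]
  · rintro _ ⟨w, hw, rfl⟩
    dsimp only
    rw [hinner, neg_le_neg_iff]
    exact hnorm.symm.le.trans (mul_le_mul_of_nonneg_left (hv w hw) (inv_nonneg.2 (norm_nonneg v)))

/-- Equality case of Cauchy–Schwarz: `‖‖v‖ • d + v‖² ≤ ‖v‖²‖d‖² - ‖v‖² ≤ 0`. -/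
theorem norm_smul_eq_neg_of_inner_le_neg_norm {v d : E} (hd : ‖d‖ ≤ 1)
    (h : ⟪v, d⟫ ≤ -‖v‖) : ‖v‖ • d = -v := by
  have hsq : ‖‖v‖ • d + v‖ ^ 2 ≤ 0 := by
    rw [norm_add_sq_real, norm_smul, norm_norm, real_inner_smul_left, real_inner_comm]
    have hd2 : (‖v‖ * ‖d‖) ^ 2 ≤ ‖v‖ ^ 2 := by
      rw [mul_pow]
      exact mul_le_of_le_one_right (sq_nonneg _) (pow_le_one₀ (norm_nonneg d) hd)
    nlinarith [mul_le_mul_of_nonneg_left h (norm_nonneg v)]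
  rw [← add_eq_zero_iff_eq_neg, ← norm_eq_zero]
  exact (pow_eq_zero_iff two_ne_zero).1 (hsq.antisymm (sq_nonneg _))

theorem supportFun_smul_mem_of_forall_le {S : Set E} (hne : S.Nonempty) (hc : IsComplete S)
    (hconv : Convex ℝ S) (hbdd : ∀ d, BddAbove ((fun v => ⟪v, d⟫) '' S)) {d₀ : E}
    (hd₀ : ‖d₀‖ ≤ 1) (hmin : ∀ d, ‖d‖ ≤ 1 → supportFun S d₀ ≤ supportFun S d) :
    supportFun S d₀ • d₀ ∈ S := by
  obtain ⟨v, hvS, hv⟩ := exists_mem_forall_norm_sq_le_inner hne hc hconv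
  have hunit : ‖-‖v‖⁻¹ • v‖ ≤ 1 := by
    rw [norm_smul, norm_neg, norm_inv, norm_norm]
    exact inv_mul_le_one_of_le₀ le_rfl (norm_nonneg v)
  have hσ_le : supportFun S d₀ ≤ -‖v‖ :=
    supportFun_neg_inv_norm_smul hvS hv ▸ hmin _ hunit
  have hinner_le : ⟪v, d₀⟫ ≤ supportFun S d₀ := le_csSup (hbdd d₀) ⟨v, hvS, rfl⟩
  have hinner_ge : -‖v‖ ≤ ⟪v, d₀⟫ :=
    (neg_le_neg (mul_le_of_le_one_right (norm_nonneg v) hd₀)).trans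
      (neg_le_of_abs_le (abs_real_inner_le_norm v d₀))
  have hσ : supportFun S d₀ = -‖v‖ := le_antisymm hσ_le (hinner_ge.trans hinner_le)
  rwa [hσ, neg_smul, norm_smul_eq_neg_of_inner_le_neg_norm hd₀ (hinner_le.trans hσ_le), neg_neg]

end SupportFunction

theorem steepest_descent_in_subdiff_general {n : ℕ}
    (f φ : EuclideanSpace ℝ (Fin n) → ℝ)
    (hφ : ConvexOn ℝ Set.univ φ)
    (x : EuclideanSpace ℝ (Fin n))
    (S : Set (EuclideanSpace ℝ (Fin n)))
    (hS : S = (fun v => gradient f x + v) '' subdiff φ x)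
    -- D d = ψ'(x; d) = sup_{v ∈ S} ⟨v, d⟩
    (D : EuclideanSpace ℝ (Fin n) → ℝ)
    (hD : ∀ d, D d = sSup ((fun v => ⟪v, d⟫) '' S))
    -- ds is the steepest descent direction
    (ds : EuclideanSpace ℝ (Fin n))
    (hds0 : (0 : EuclideanSpace ℝ (Fin n)) ∈ S → ds = 0)
    (hds : (0 : EuclideanSpace ℝ (Fin n)) ∉ S →
      ‖ds‖ ≤ 1 ∧ ∀ d, ‖d‖ ≤ 1 → D ds ≤ D d) :
    D ds • ds ∈ S := by
  by_cases h0 : (0 : EuclideanSpace ℝ (Fin n)) ∈ S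
  · rwa [hds0 h0, smul_zero]
  obtain ⟨hds_norm, hds_min⟩ := hds h0
  obtain rfl : D = supportFun S := funext hD
  subst hS
  have hbdd : ∀ d, BddAbove ((fun v => ⟪v, d⟫) '' ((gradient f x + ·) '' subdiff φ x)) :=
    fun d => ⟨⟪gradient f x, d⟫ + (φ (x + d) - φ x), by
      rintro _ ⟨_, ⟨v, hv, rfl⟩, rfl⟩
      dsimp only
      rw [inner_add_left]
      exact add_le_add_right (inner_le_of_mem_subdiff hv d) _⟩
  exact supportFun_smul_mem_of_forall_le ((subdiff_nonempty hφ x).image _)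
    ((Homeomorph.addLeft _).isClosedMap _ (isClosed_subdiff φ x)).isComplete
    ((convex_subdiff φ x).translate _) hbdd hds_norm hds_min

/-- For ψ = f + φ with f continuously differentiable and φ convex
real-valued, the vector ψ'(x; d_s(x))·d_s(x) belongs to ∂ψ(x), where d_s(x) is the
steepest descent direction (equal to 0 when 0 ∈ ∂ψ(x)) and
ψ'(x;d) = sup_{v ∈ ∂ψ(x)} ⟨v, d⟩. -/
theorem steepest_descent_in_subdiff {n : ℕ}
    (f φ : EuclideanSpace ℝ (Fin n) → ℝ)
    (hf : ContDiff ℝ 1 f) (hφ : ConvexOn ℝ Set.univ φ)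
    (x : EuclideanSpace ℝ (Fin n))
    (S : Set (EuclideanSpace ℝ (Fin n)))
    (hS : S = (fun v => gradient f x + v) '' subdiff φ x)
    -- D d = ψ'(x; d) = sup_{v ∈ S} ⟨v, d⟩
    (D : EuclideanSpace ℝ (Fin n) → ℝ)
    (hD : ∀ d, D d = sSup ((fun v => ⟪v, d⟫) '' S))
    -- ds is the steepest descent direction
    (ds : EuclideanSpace ℝ (Fin n))
    (hds0 : (0 : EuclideanSpace ℝ (Fin n)) ∈ S → ds = 0)
    (hds : (0 : EuclideanSpace ℝ (Fin n)) ∉ S →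
      ‖ds‖ ≤ 1 ∧ ∀ d, ‖d‖ ≤ 1 → D ds ≤ D d) :
    D ds • ds ∈ S :=
  steepest_descent_in_subdiff_general f φ hφ x S hS D hD ds hds0 hds
end

section
/- For Λ symmetric positive definite, ∂ψ(x) = { F_nor^Λ(z) : prox_φ^Λ(z) = x }, where F_nor^Λ(z) := ∇f(prox_φ^Λ(z)) + Λ(z − prox_φ^Λ(z)) is the normal map. -/
/-!
A point `p` minimizes `φ y + ½⟪y - z, Λ (y - z)⟫` exactly when `Λ (z - p) ∈ ∂φ(p)`: the
perturbation `p + t (y - p)` together with convexity of `φ` gives the subgradient inequality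
after dividing by `t` and letting `t → 0`, and conversely a subgradient `Λ (z - x)` at `x` forces
every minimizer `p` to satisfy `⟪p - x, Λ (p - x)⟫ ≤ 0`, hence `p = x`. Since `Λ` is invertible,
every subgradient `v` at `x` is of the form `Λ (z - x)` with `z = x + Λ⁻¹ v`.
-/

open scoped RealInnerProductSpace

open Set Filter Topology

theorem nonneg_of_forall_add_mul_nonneg {c d : ℝ} (h : ∀ t : ℝ, 0 < t → t ≤ 1 → 0 ≤ c + t * d) :
    0 ≤ c := by
  have hlim : Tendsto (fun t : ℝ => c + t * d) (𝓝[>] 0) (𝓝 c) := by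
    have : Continuous (fun t : ℝ => c + t * d) := by fun_prop
    simpa using (this.tendsto 0).mono_left nhdsWithin_le_nhds
  refine ge_of_tendsto hlim ?_
  filter_upwards [Ioc_mem_nhdsGT one_pos] with t ht using h t ht.1 ht.2

section Prox

variable {E : Type*} [NormedAddCommGroup E] [InnerProductSpace ℝ E] {A : E →ₗ[ℝ] E}

theorem LinearMap.IsSymmetric.inner_add_map_add (hA : A.IsSymmetric) (u w : E) :
    ⟪u + w, A (u + w)⟫ = ⟪u, A u⟫ + 2 * ⟪A u, w⟫ + ⟪w, A w⟫ := by
  rw [map_add, inner_add_left, inner_add_right, inner_add_right, ← hA u w,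
    real_inner_comm (A u) w]
  ring

variable {φ : E → ℝ} {z p : E}

theorem subgradient_of_isMinOn_prox (hφ : ConvexOn ℝ univ φ) (hA : A.IsSymmetric)
    (hp : IsMinOn (fun y => φ y + (1 / 2) * ⟪y - z, A (y - z)⟫) univ p) (y : E) :
    φ p + ⟪A (z - p), y - p⟫ ≤ φ y := by
  suffices 0 ≤ φ y - φ p - ⟪A (z - p), y - p⟫ by linarith
  refine nonneg_of_forall_add_mul_nonneg (d := (1 / 2) * ⟪y - p, A (y - p)⟫) fun t ht ht1 => ?_
  have hmin := isMinOn_univ_iff.mp hp (p + t • (y - p))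
  have hconv : φ (p + t • (y - p)) ≤ (1 - t) * φ p + t * φ y := by
    have := hφ.2 (mem_univ p) (mem_univ y) (show 0 ≤ 1 - t by linarith) ht.le (by ring)
    simpa [smul_eq_mul, show (1 - t) • p + t • y = p + t • (y - p) by module] using this
  have hexp : ⟪p + t • (y - p) - z, A (p + t • (y - p) - z)⟫ =
      ⟪p - z, A (p - z)⟫ - 2 * t * ⟪A (z - p), y - p⟫ + t ^ 2 * ⟪y - p, A (y - p)⟫ := by
    rw [show p + t • (y - p) - z = (p - z) + t • (y - p) by abel, hA.inner_add_map_add,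
      map_smul, real_inner_smul_right, real_inner_smul_left, real_inner_smul_right,
      ← neg_sub z p]
    simp only [map_neg, inner_neg_left, inner_neg_right]
    ring
  rw [hexp] at hmin
  have : 0 ≤ t * (φ y - φ p - ⟪A (z - p), y - p⟫ + t * ((1 / 2) * ⟪y - p, A (y - p)⟫)) := by
    linarith
  exact nonneg_of_mul_nonneg_right this ht

theorem eq_of_isMinOn_prox_of_subgradient (hA : A.IsSymmetric)
    (hpos : ∀ u, u ≠ 0 → 0 < ⟪u, A u⟫)
    (hp : IsMinOn (fun y => φ y + (1 / 2) * ⟪y - z, A (y - z)⟫) univ p) {x : E}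
    (hx : ∀ y, φ x + ⟪A (z - x), y - x⟫ ≤ φ y) : p = x := by
  have hmin := isMinOn_univ_iff.mp hp x
  have hexp : ⟪p - z, A (p - z)⟫ =
      ⟪p - x, A (p - x)⟫ - 2 * ⟪A (z - x), p - x⟫ + ⟪x - z, A (x - z)⟫ := by
    have hcross : ⟪A (p - x), x - z⟫ = -⟪A (z - x), p - x⟫ := by
      rw [hA, real_inner_comm (A (x - z)), ← neg_sub z x, map_neg, inner_neg_left]
    rw [show p - z = (p - x) + (x - z) by abel, hA.inner_add_map_add, hcross]
    ring
  have hsub := hx p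
  by_contra hne
  have := hpos (p - x) (sub_ne_zero.mpr hne)
  linarith

theorem surjective_of_inner_map_self_pos [FiniteDimensional ℝ E]
    (hpos : ∀ u, u ≠ 0 → 0 < ⟪u, A u⟫) : Function.Surjective A := by
  refine LinearMap.injective_iff_surjective.mp fun u w huw => ?_
  by_contra hne
  have := hpos (u - w) (sub_ne_zero.mpr hne)
  simp [map_sub, huw] at this

theorem subgradient_iff_exists_isMinOn_prox [FiniteDimensional ℝ E] (hφ : ConvexOn ℝ univ φ)
    (hA : A.IsSymmetric) (hpos : ∀ u, u ≠ 0 → 0 < ⟪u, A u⟫) {prox : E → E}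
    (hprox : ∀ z, IsMinOn (fun y => φ y + (1 / 2) * ⟪y - z, A (y - z)⟫) univ (prox z))
    (x v : E) : (∀ y, φ x + ⟪v, y - x⟫ ≤ φ y) ↔ ∃ z, prox z = x ∧ v = A (z - x) := by
  constructor
  · intro hv
    obtain ⟨w, rfl⟩ := surjective_of_inner_map_self_pos hpos v
    have hzx : x + w - x = w := add_sub_cancel_left x w
    refine ⟨x + w, eq_of_isMinOn_prox_of_subgradient hA hpos (hprox _) ?_, by rw [hzx]⟩
    rwa [hzx]
  · rintro ⟨z, rfl, rfl⟩
    exact subgradient_of_isMinOn_prox hφ hA (hprox z)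

end Prox

theorem Matrix.PosDef.inner_toEuclideanLin_self_pos {ι : Type*} [Fintype ι] [DecidableEq ι]
    {Λ : Matrix ι ι ℝ} (hΛ : Λ.PosDef) (u : EuclideanSpace ℝ ι) (hu : u ≠ 0) :
    0 < ⟪u, Matrix.toEuclideanLin Λ u⟫ := by
  simpa [EuclideanSpace.inner_eq_star_dotProduct, dotProduct_comm] using
    hΛ.dotProduct_mulVec_pos (x := WithLp.ofLp u) (by simpa using hu)

theorem subdiff_eq_normal_map_image_general {n : ℕ}
    (f φ : EuclideanSpace ℝ (Fin n) → ℝ)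
    (hφ : ConvexOn ℝ Set.univ φ)
    (Λ : Matrix (Fin n) (Fin n) ℝ) (hΛ : Λ.PosDef)
    (prox : EuclideanSpace ℝ (Fin n) → EuclideanSpace ℝ (Fin n))
    (hprox : ∀ z y, φ (prox z) +
        (1 / 2) * ⟪prox z - z, Matrix.toEuclideanLin Λ (prox z - z)⟫ ≤
      φ y + (1 / 2) * ⟪y - z, Matrix.toEuclideanLin Λ (y - z)⟫)
    (x : EuclideanSpace ℝ (Fin n)) :
    (fun v => gradient f x + v) '' subdiff φ x =
      {w | ∃ z, prox z = x ∧
        w = gradient f (prox z) + Matrix.toEuclideanLin Λ (z - prox z)} := by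
  have hsubdiff (v : EuclideanSpace ℝ (Fin n)) :
      v ∈ subdiff φ x ↔ ∃ z, prox z = x ∧ v = Matrix.toEuclideanLin Λ (z - x) :=
    subgradient_iff_exists_isMinOn_prox hφ
      (Matrix.isSymmetric_toEuclideanLin_iff.mpr hΛ.isHermitian)
      hΛ.inner_toEuclideanLin_self_pos (fun z => isMinOn_univ_iff.mpr (hprox z)) x v
  ext w
  simp only [mem_image, hsubdiff, mem_ofPred_eq]
  constructor
  · rintro ⟨_, ⟨z, hz, rfl⟩, rfl⟩
    exact ⟨z, hz, by rw [hz]⟩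
  · rintro ⟨z, hz, rfl⟩
    exact ⟨_, ⟨z, hz, rfl⟩, by rw [hz]⟩

/-- For Λ symmetric positive definite,
∂ψ(x) = { F_nor^Λ(z) : prox_φ^Λ(z) = x }, where
F_nor^Λ(z) := ∇f(prox_φ^Λ(z)) + Λ(z − prox_φ^Λ(z)) is the normal map and
∂ψ(x) = {∇f(x)} + ∂φ(x). -/
theorem subdiff_eq_normal_map_image {n : ℕ}
    (f φ : EuclideanSpace ℝ (Fin n) → ℝ)
    (hf : ContDiff ℝ 1 f) (hφ : ConvexOn ℝ Set.univ φ)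
    (Λ : Matrix (Fin n) (Fin n) ℝ) (hΛsym : Λ.IsSymm) (hΛ : Λ.PosDef)
    (prox : EuclideanSpace ℝ (Fin n) → EuclideanSpace ℝ (Fin n))
    (hprox : ∀ z y, φ (prox z) +
        (1 / 2) * ⟪prox z - z, Matrix.toEuclideanLin Λ (prox z - z)⟫ ≤
      φ y + (1 / 2) * ⟪y - z, Matrix.toEuclideanLin Λ (y - z)⟫)
    (x : EuclideanSpace ℝ (Fin n)) :
    (fun v => gradient f x + v) '' subdiff φ x =
      {w | ∃ z, prox z = x ∧
        w = gradient f (prox z) + Matrix.toEuclideanLin Λ (z - prox z)} :=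
  subdiff_eq_normal_map_image_general f φ hφ Λ hΛ prox hprox x
end

section
/- The solution of min_{z} ‖∇f(x) + Λ(z − x)‖ subject to prox_φ^Λ(z) = x is given by τ(x) = x + Λ⁻¹ P_{∂φ(x)}(−∇f(x)), and correspondingly F_nor^Λ(τ(x)) = ∇f(x) + P_{∂φ(x)}(−∇f(x)), where P_{∂φ(x)} denotes Euclidean projection onto ∂φ(x). -/
open scoped RealInnerProductSpace

/-- The solution of min_z ‖∇f(x) + Λ(z − x)‖ subject to prox_φ^Λ(z) = x
is given by τ(x) = x + Λ⁻¹ P_{∂φ(x)}(−∇f(x)), and correspondingly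
F_nor^Λ(τ(x)) = ∇f(x) + P_{∂φ(x)}(−∇f(x)), where P_{∂φ(x)} is the Euclidean
projection onto ∂φ(x); here prox_φ^Λ(z) = x ⟺ Λ(z−x) ∈ ∂φ(x). -/
theorem tau_solves_normal_map_min {n : ℕ}
    (f φ : EuclideanSpace ℝ (Fin n) → ℝ)
    (hf : ContDiff ℝ 1 f) (hφ : ConvexOn ℝ Set.univ φ)
    (Λ : Matrix (Fin n) (Fin n) ℝ) (hΛsym : Λ.IsSymm) (hΛ : Λ.PosDef)
    (prox : EuclideanSpace ℝ (Fin n) → EuclideanSpace ℝ (Fin n))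
    (x : EuclideanSpace ℝ (Fin n))
    -- characterization of the proximal operator: prox z = x ⟺ Λ(z − x) ∈ ∂φ(x)
    (hprox : ∀ z, prox z = x ↔ Matrix.toEuclideanLin Λ (z - x) ∈ subdiff φ x)
    -- p = P_{∂φ(x)}(−∇f(x)), the Euclidean projection of −∇f(x) onto ∂φ(x)
    (p : EuclideanSpace ℝ (Fin n)) (hp : p ∈ subdiff φ x)
    (hpmin : ∀ v ∈ subdiff φ x, ‖p - (-(gradient f x))‖ ≤ ‖v - (-(gradient f x))‖) :
    (prox (x + Matrix.toEuclideanLin Λ⁻¹ p) = x ∧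
      (∀ z, prox z = x →
        ‖gradient f x + Matrix.toEuclideanLin Λ ((x + Matrix.toEuclideanLin Λ⁻¹ p) - x)‖ ≤
          ‖gradient f x + Matrix.toEuclideanLin Λ (z - x)‖)) ∧
      gradient f x + Matrix.toEuclideanLin Λ ((x + Matrix.toEuclideanLin Λ⁻¹ p) - x) =
        gradient f x + p := by
  have hdet : IsUnit Λ.det := isUnit_iff_ne_zero.mpr hΛ.det_pos.ne'
  have hkey : Matrix.toEuclideanLin Λ ((x + Matrix.toEuclideanLin Λ⁻¹ p) - x) = p := by
    have h1 : (x + Matrix.toEuclideanLin Λ⁻¹ p) - x = Matrix.toEuclideanLin Λ⁻¹ p := by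
      abel
    rw [h1]
    simp [Matrix.toEuclideanLin_apply, Matrix.mulVec_mulVec, Matrix.mul_nonsing_inv Λ hdet]
  refine ⟨⟨(hprox _).mpr (by rw [hkey]; exact hp), ?_⟩, by rw [hkey]⟩
  intro z hz
  have hv := (hprox z).mp hz
  have := hpmin _ hv
  have e1 : gradient f x + Matrix.toEuclideanLin Λ (z - x)
      = Matrix.toEuclideanLin Λ (z - x) - (-(gradient f x)) := by abel
  rw [hkey, e1]
  calc ‖gradient f x + p‖ = ‖p - (-(gradient f x))‖ := by rw [sub_neg_eq_add]; rw [add_comm]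
    _ ≤ _ := this
end

section
/- For group lasso φ(X) = Σ_{i=1}^{n₂} ‖X_i‖ on ℝ^{n₁×n₂}, the safeguard Γ(X) := inf_{‖D‖=1} Γ_max(X, D) equals min{ ‖X_i‖ : X_i ≠ 0 } (with min ∅ = +∞), where Γ_max(X,D) is the supremum of T > 0 such that t ↦ φ'(X + tD; D) is C¹ on (0, T). -/
open scoped RealInnerProductSpace

/-- Γ_max(X,D): the supremum of T > 0 such that t ↦ φ(X + tD) = Σᵢ‖Xᵢ + tDᵢ‖ is
continuously differentiable on (0, T) (for the group-lasso penalty this is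
equivalent to continuity of the directional derivative t ↦ φ'(X+tD;D)). -/
noncomputable def gammaMax {n₁ n₂ : ℕ} (X D : Fin n₂ → EuclideanSpace ℝ (Fin n₁)) :
    EReal :=
  sSup {T : EReal | ∃ t : ℝ, T = (t : EReal) ∧ 0 < t ∧
    ContDiffOn ℝ 1 (fun s : ℝ => ∑ i, ‖X i + s • D i‖) (Set.Ioo 0 t)}

/-! Along the line `s ↦ X + s • D` with `‖D i‖ ≤ 1`, a column `X i ≠ 0` cannot vanish before
`s = ‖X i‖`, and a column `X i = 0` contributes `s * ‖D i‖`, which is smooth for `s > 0`; so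
`gammaMax X D ≥ min ‖X i‖`. Conversely, moving column `i` straight towards the origin at unit
speed makes it contribute `|s - ‖X i‖|`, which has a kink at `s = ‖X i‖`. -/

lemma norm_add_smul_neg_normalize {E : Type*} [NormedAddCommGroup E] [NormedSpace ℝ E] {x : E}
    (hx : x ≠ 0) (s : ℝ) : ‖x + s • -(‖x‖⁻¹ • x)‖ = |s - ‖x‖| := by
  have hr : 0 < ‖x‖ := norm_pos_iff.2 hx
  have hline : x + s • -(‖x‖⁻¹ • x) = ((‖x‖ - s) / ‖x‖) • x := by
    rw [sub_div, div_self hr.ne', smul_neg, smul_smul, sub_smul, one_smul, div_eq_mul_inv,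
      sub_eq_add_neg]
  rw [hline, norm_smul, Real.norm_eq_abs, abs_div, abs_of_pos hr, div_mul_cancel₀ _ hr.ne',
    abs_sub_comm]

lemma not_differentiableAt_abs_sub_add (r c : ℝ) :
    ¬DifferentiableAt ℝ (fun s : ℝ => |s - r| + c) r := by
  rw [differentiableAt_add_const_iff, differentiableAt_comp_sub_const, sub_self]
  exact not_differentiableAt_abs_zero

lemma contDiffOn_norm_add_smul {E : Type*} [NormedAddCommGroup E] [InnerProductSpace ℝ E]
    {x d : E} {t : ℝ} (hd : ‖d‖ ≤ 1) (ht : x ≠ 0 → t ≤ ‖x‖) :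
    ContDiffOn ℝ 1 (fun s : ℝ => ‖x + s • d‖) (Set.Ioo 0 t) := by
  by_cases hx : x = 0
  · refine (contDiff_id.mul (contDiff_const (c := ‖d‖))).contDiffOn.congr fun s hs => ?_
    rw [hx, zero_add, norm_smul, Real.norm_eq_abs, abs_of_pos hs.1, id]
  · refine (contDiffOn_const.add (contDiffOn_id.smul contDiffOn_const)).norm ℝ fun s hs => ?_
    have hsd : ‖s • d‖ < ‖x‖ := by
      rw [norm_smul, Real.norm_eq_abs, abs_of_pos hs.1]
      exact (mul_le_of_le_one_right hs.1.le hd).trans_lt (hs.2.trans_le (ht hx))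
    intro h0
    rw [eq_neg_of_add_eq_zero_left h0, norm_neg] at hsd
    exact lt_irrefl _ hsd

lemma norm_le_one_of_sum_sq_norm_eq_one {ι E : Type*} [Fintype ι] [SeminormedAddCommGroup E]
    {D : ι → E} (hD : ∑ i, ‖D i‖ ^ 2 = 1) (i : ι) : ‖D i‖ ≤ 1 := by
  have hsq : ‖D i‖ ^ 2 ≤ 1 :=
    hD ▸ Finset.single_le_sum (fun j _ => sq_nonneg ‖D j‖) (Finset.mem_univ i)
  nlinarith [norm_nonneg (D i)]

lemma sum_norm_add_smul_single {ι E : Type*} [Fintype ι] [DecidableEq ι]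
    [SeminormedAddCommGroup E] [Module ℝ E] (X : ι → E) (i : ι) (u : E) (s : ℝ) :
    ∑ j, ‖X j + s • (Pi.single i u : ι → E) j‖ = ‖X i + s • u‖ + ∑ j ∈ {i}ᶜ, ‖X j‖ := by
  rw [Fintype.sum_eq_add_sum_compl i, Pi.single_eq_same]
  congr 1
  refine Finset.sum_congr rfl fun j hj => ?_
  rw [Finset.mem_compl, Finset.mem_singleton] at hj
  rw [Pi.single_eq_of_ne hj, smul_zero, add_zero]

section GroupLasso

variable {n₁ n₂ : ℕ}

lemma coe_le_gammaMax {X D : Fin n₂ → EuclideanSpace ℝ (Fin n₁)} (hD : ∀ i, ‖D i‖ ≤ 1)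
    {t : ℝ} (ht : 0 < t) (htX : ∀ i, X i ≠ 0 → t ≤ ‖X i‖) : (t : EReal) ≤ gammaMax X D :=
  le_sSup ⟨t, rfl, ht, ContDiffOn.sum fun i _ => contDiffOn_norm_add_smul (hD i) (htX i)⟩

lemma gammaMax_le_of_not_differentiableAt {X D : Fin n₂ → EuclideanSpace ℝ (Fin n₁)} {r : ℝ}
    (hr : 0 < r) (hφ : ¬DifferentiableAt ℝ (fun s : ℝ => ∑ i, ‖X i + s • D i‖) r) :
    gammaMax X D ≤ r := by
  refine sSup_le ?_
  rintro _ ⟨t, rfl, -, hφt⟩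
  rw [EReal.coe_le_coe_iff]
  by_contra! hrt
  exact hφ ((hφt.contDiffAt (Ioo_mem_nhds hr hrt)).differentiableAt one_ne_zero)

lemma gammaMax_single_neg_normalize_le {X : Fin n₂ → EuclideanSpace ℝ (Fin n₁)} {i : Fin n₂}
    (hi : X i ≠ 0) : gammaMax X (Pi.single i (-(‖X i‖⁻¹ • X i))) ≤ (‖X i‖ : EReal) := by
  refine gammaMax_le_of_not_differentiableAt (norm_pos_iff.2 hi) ?_
  simp only [sum_norm_add_smul_single, norm_add_smul_neg_normalize hi]
  exact not_differentiableAt_abs_sub_add _ _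

lemma sum_sq_norm_single_neg_normalize {X : Fin n₂ → EuclideanSpace ℝ (Fin n₁)} {i : Fin n₂}
    (hi : X i ≠ 0) :
    ∑ j, ‖(Pi.single i (-(‖X i‖⁻¹ • X i)) : Fin n₂ → EuclideanSpace ℝ (Fin n₁)) j‖ ^ 2 = 1 := by
  rw [Fintype.sum_eq_single i fun j hj => by rw [Pi.single_eq_of_ne hj, norm_zero, sq, mul_zero],
    Pi.single_eq_same, norm_neg, norm_smul, norm_inv, norm_norm,
    inv_mul_cancel₀ (norm_ne_zero_iff.2 hi), one_pow]

lemma sInf_norm_le_gammaMax (X : Fin n₂ → EuclideanSpace ℝ (Fin n₁))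
    {D : Fin n₂ → EuclideanSpace ℝ (Fin n₁)} (hD : ∀ i, ‖D i‖ ≤ 1) :
    sInf {r : EReal | ∃ i, X i ≠ 0 ∧ r = (‖X i‖ : EReal)} ≤ gammaMax X D := by
  set S := {r : EReal | ∃ i, X i ≠ 0 ∧ r = (‖X i‖ : EReal)}
  rcases S.eq_empty_or_nonempty with hS | hS
  · have hX : ∀ i, X i = 0 := fun i => by
      by_contra hi
      exact hS.subset ⟨i, hi, rfl⟩
    rw [hS, sInf_empty, top_le_iff, EReal.eq_top_iff_forall_lt]
    intro y
    calc (y : EReal) < (max y 0 + 1 : ℝ) :=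
          EReal.coe_lt_coe_iff.2 ((le_max_left y 0).trans_lt (lt_add_one _))
      _ ≤ gammaMax X D := coe_le_gammaMax hD (by positivity) fun i hi => absurd (hX i) hi
  · have hSfin : S.Finite :=
      (Set.finite_range fun i => (‖X i‖ : EReal)).subset fun _ ⟨i, _, hr⟩ => ⟨i, hr.symm⟩
    obtain ⟨j, hj, hjS⟩ := hS.csInf_mem hSfin
    rw [hjS]
    exact coe_le_gammaMax hD (norm_pos_iff.2 hj) fun i hi =>
      EReal.coe_le_coe_iff.1 (hjS ▸ sInf_le ⟨i, hi, rfl⟩)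

end GroupLasso

/-- For group lasso φ(X) = Σ_{i=1}^{n₂} ‖X_i‖ on ℝ^{n₁×n₂}, the
safeguard Γ(X) := inf_{‖D‖=1} Γ_max(X, D) equals min{ ‖X_i‖ : X_i ≠ 0 }
(with min ∅ = +∞, i.e. sInf ∅ = ⊤ in EReal). -/
theorem group_lasso_gamma {n₁ n₂ : ℕ} (X : Fin n₂ → EuclideanSpace ℝ (Fin n₁)) :
    sInf {g : EReal | ∃ D : Fin n₂ → EuclideanSpace ℝ (Fin n₁),
        (∑ i, ‖D i‖ ^ 2 = 1) ∧ g = gammaMax X D} =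
      sInf {r : EReal | ∃ i, X i ≠ 0 ∧ r = (‖X i‖ : EReal)} := by
  refine le_antisymm (le_sInf ?_) (le_sInf ?_)
  · rintro _ ⟨i, hi, rfl⟩
    exact sInf_le_of_le ⟨_, sum_sq_norm_single_neg_normalize hi, rfl⟩
      (gammaMax_single_neg_normalize_le hi)
  · rintro _ ⟨D, hD, rfl⟩
    exact sInf_norm_le_gammaMax X (norm_le_one_of_sum_sq_norm_eq_one hD)
end

section
/- Let B ∈ ℝ^{n×n} satisfy (1/2)hᵀBh + t‖h‖² ≥ λ₁‖h‖² for all h and ‖B + tI‖ ≤ λ₂ for constants λ₁, λ₂ > 0 and some t ≥ 0. Suppose p solves (B + tI)p = −g + r with ‖r‖ ≤ λ₁‖g‖/(2(λ₁+λ₂)), and set s = min{Δ, ‖p‖}·p/‖p‖. Then for m(s) = ⟨g,s⟩ + (1/2)⟨s,Bs⟩ one has m(0) − m(s) ≥ (λ₁/(2λ₂))‖g‖ min{Δ, ((λ₁+2λ₂)/(2λ₂(λ₁+λ₂)))‖g‖}. -/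
/-!
Along the ray through `p` the model is a convex quadratic whose linear term is controlled by the
regularized Newton equation: `⟪g, p⟫ = ⟪p, r⟫ - ⟪p, B p⟫ - t ‖p‖²`. Hence for `0 ≤ τ ≤ 1` the
decrease `m(0) - m(τ p)` is at least `τ ‖p‖ (λ₁ ‖p‖ - ‖r‖)`, i.e. it scales linearly in the step
length `τ ‖p‖ = min Δ ‖p‖`. The bound `‖B + t I‖ ≤ λ₂` gives `λ₂ ‖p‖ ≥ ‖g‖ - ‖r‖`, which together
with the smallness of the residual `r` bounds both `‖p‖` and `λ₁ ‖p‖ - ‖r‖` below by multiples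
of `‖g‖`.
-/

open scoped RealInnerProductSpace

section QuadraticModel

variable {E : Type*} [NormedAddCommGroup E] [InnerProductSpace ℝ E]

noncomputable def quadModel (g : E) (B : E →L[ℝ] E) (s : E) : ℝ := ⟪g, s⟫ + (1 / 2) * ⟪s, B s⟫

variable {g : E} {B : E →L[ℝ] E}

theorem quadModel_smul (τ : ℝ) (p : E) :
    quadModel g B (τ • p) = τ * ⟪g, p⟫ + τ ^ 2 / 2 * ⟪p, B p⟫ := by
  simp only [quadModel, map_smul, real_inner_smul_left, real_inner_smul_right]
  ring

theorem inner_eq_of_apply_add_smul_eq {p r : E} {t : ℝ} (hp : B p + t • p = -g + r) :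
    ⟪g, p⟫ = ⟪p, r⟫ - ⟪p, B p⟫ - t * ‖p‖ ^ 2 := by
  have h := congrArg (fun v => ⟪p, v⟫) hp
  simp only [inner_add_right, inner_smul_right, inner_neg_right,
    real_inner_self_eq_norm_sq, real_inner_comm g p] at h
  linarith

theorem mul_le_neg_quadModel_smul {p r : E} {t lam₁ τ : ℝ} (hp : B p + t • p = -g + r)
    (hBp : 0 ≤ ⟪p, B p⟫) (hlam₁ : lam₁ * ‖p‖ ^ 2 ≤ (1 / 2) * ⟪p, B p⟫ + t * ‖p‖ ^ 2)
    (hτ₀ : 0 ≤ τ) (hτ₁ : τ ≤ 1) :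
    τ * ‖p‖ * (lam₁ * ‖p‖ - ‖r‖) ≤ -quadModel g B (τ • p) := by
  rw [quadModel_smul, inner_eq_of_apply_add_smul_eq hp]
  have hpr : ⟪p, r⟫ ≤ ‖p‖ * ‖r‖ := real_inner_le_norm p r
  -- `-m(τ p) = τ (½⟪p, B p⟫ + t‖p‖² - ⟪p, r⟫) + ½ τ (1 - τ) ⟪p, B p⟫`
  nlinarith [mul_le_mul_of_nonneg_left hpr hτ₀, mul_le_mul_of_nonneg_left hlam₁ hτ₀,
    mul_nonneg (mul_nonneg hτ₀ (sub_nonneg.mpr hτ₁)) hBp]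

theorem mul_le_neg_quadModel_truncate {p r : E} {t lam₁ Δ : ℝ} (hΔ : 0 ≤ Δ)
    (hp : B p + t • p = -g + r) (hBp : 0 ≤ ⟪p, B p⟫)
    (hlam₁ : lam₁ * ‖p‖ ^ 2 ≤ (1 / 2) * ⟪p, B p⟫ + t * ‖p‖ ^ 2) :
    min Δ ‖p‖ * (lam₁ * ‖p‖ - ‖r‖) ≤ -quadModel g B (min Δ ‖p‖ • ‖p‖⁻¹ • p) := by
  rcases eq_or_ne p 0 with rfl | hp₀
  · simp [quadModel, min_eq_right hΔ]
  have hN : 0 < ‖p‖ := norm_pos_iff.mpr hp₀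
  have hτ := mul_le_neg_quadModel_smul (τ := min Δ ‖p‖ / ‖p‖) hp hBp hlam₁
    (div_nonneg (le_min hΔ hN.le) hN.le) (div_le_one_of_le₀ (min_le_right _ _) hN.le)
  rwa [div_mul_cancel₀ _ hN.ne', div_eq_mul_inv, ← smul_smul] at hτ

end QuadraticModel

section StepLengthBounds

variable {lam₁ lam₂ a ρ N : ℝ}

theorem div_mul_le_of_sub_le_mul (hlam₁ : 0 < lam₁) (hlam₂ : 0 < lam₂)
    (hρ : ρ ≤ lam₁ * a / (2 * (lam₁ + lam₂))) (hN : a - ρ ≤ lam₂ * N) :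
    (lam₁ + 2 * lam₂) / (2 * lam₂ * (lam₁ + lam₂)) * a ≤ N := by
  rw [le_div_iff₀ (by positivity)] at hρ
  rw [div_mul_eq_mul_div, div_le_iff₀ (by positivity)]
  nlinarith [mul_le_mul_of_nonneg_left hN (show (0 : ℝ) ≤ 2 * (lam₁ + lam₂) by positivity)]

theorem div_mul_le_mul_sub_of_sub_le_mul (hlam₁ : 0 < lam₁) (hlam₂ : 0 < lam₂)
    (hρ : ρ ≤ lam₁ * a / (2 * (lam₁ + lam₂))) (hN : a - ρ ≤ lam₂ * N) :
    lam₁ / (2 * lam₂) * a ≤ lam₁ * N - ρ := by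
  rw [le_div_iff₀ (by positivity)] at hρ
  rw [div_mul_eq_mul_div, div_le_iff₀ (by positivity)]
  nlinarith [mul_le_mul_of_nonneg_left hN hlam₁.le]

end StepLengthBounds

theorem regularized_newton_model_decrease_general {n : ℕ}
    (g : EuclideanSpace ℝ (Fin n))
    (B : EuclideanSpace ℝ (Fin n) →L[ℝ] EuclideanSpace ℝ (Fin n))
    (hBpsd : ∀ h : EuclideanSpace ℝ (Fin n), 0 ≤ ⟪h, B h⟫)
    (t : ℝ)
    (lam₁ lam₂ : ℝ) (hlam₁ : 0 < lam₁) (hlam₂ : 0 < lam₂)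
    (h1 : ∀ h : EuclideanSpace ℝ (Fin n),
      lam₁ * ‖h‖ ^ 2 ≤ (1 / 2) * ⟪h, B h⟫ + t * ‖h‖ ^ 2)
    (h2 : ‖B + t • ContinuousLinearMap.id ℝ (EuclideanSpace ℝ (Fin n))‖ ≤ lam₂)
    (Δ : ℝ) (hΔ : 0 < Δ)
    (p r : EuclideanSpace ℝ (Fin n))
    (hp : B p + t • p = -g + r)
    (hr : ‖r‖ ≤ lam₁ * ‖g‖ / (2 * (lam₁ + lam₂)))
    (m : EuclideanSpace ℝ (Fin n) → ℝ)
    (hm : ∀ s, m s = ⟪g, s⟫ + (1 / 2) * ⟪s, B s⟫)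
    (s : EuclideanSpace ℝ (Fin n)) (hs : s = min Δ ‖p‖ • ‖p‖⁻¹ • p) :
    (lam₁ / (2 * lam₂)) * ‖g‖ *
        min Δ ((lam₁ + 2 * lam₂) / (2 * lam₂ * (lam₁ + lam₂)) * ‖g‖) ≤
      m 0 - m s := by
  obtain rfl : m = quadModel g B := funext hm
  have hres : ‖g‖ - ‖r‖ ≤ lam₂ * ‖p‖ :=
    calc ‖g‖ - ‖r‖ ≤ ‖-g + r‖ := by simpa using norm_sub_norm_le (-g) (-r)
      _ = ‖(B + t • ContinuousLinearMap.id ℝ (EuclideanSpace ℝ (Fin n))) p‖ := by simp [hp]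
      _ ≤ ‖B + t • ContinuousLinearMap.id ℝ (EuclideanSpace ℝ (Fin n))‖ * ‖p‖ :=
          ContinuousLinearMap.le_opNorm _ _
      _ ≤ lam₂ * ‖p‖ := by gcongr
  have hcoeff := div_mul_le_mul_sub_of_sub_le_mul hlam₁ hlam₂ hr hres
  subst hs
  calc lam₁ / (2 * lam₂) * ‖g‖ * min Δ ((lam₁ + 2 * lam₂) / (2 * lam₂ * (lam₁ + lam₂)) * ‖g‖)
      ≤ (lam₁ * ‖p‖ - ‖r‖) * min Δ ‖p‖ :=
        mul_le_mul hcoeff (min_le_min_left _ (div_mul_le_of_sub_le_mul hlam₁ hlam₂ hr hres))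
          (le_min hΔ.le (by positivity)) (le_trans (by positivity) hcoeff)
    _ ≤ quadModel g B 0 - quadModel g B (min Δ ‖p‖ • ‖p‖⁻¹ • p) := by
        rw [mul_comm, show quadModel g B 0 = 0 by simp [quadModel], zero_sub]
        exact mul_le_neg_quadModel_truncate hΔ.le hp (hBpsd p) (h1 p)

/-- Let B satisfy (1/2)hᵀBh + t‖h‖² ≥ λ₁‖h‖² for all h and
‖B + tI‖ ≤ λ₂, with λ₁, λ₂ > 0 and t ≥ 0, B positive semidefinite. Suppose p
solves (B + tI)p = −g + r with ‖r‖ ≤ λ₁‖g‖/(2(λ₁+λ₂)), and set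
s = min{Δ, ‖p‖}·p/‖p‖. Then for m(s) = ⟨g,s⟩ + (1/2)⟨s,Bs⟩ one has
m(0) − m(s) ≥ (λ₁/(2λ₂))‖g‖ min{Δ, ((λ₁+2λ₂)/(2λ₂(λ₁+λ₂)))‖g‖}. -/
theorem regularized_newton_model_decrease {n : ℕ}
    (g : EuclideanSpace ℝ (Fin n)) (hg : g ≠ 0)
    (B : EuclideanSpace ℝ (Fin n) →L[ℝ] EuclideanSpace ℝ (Fin n))
    (hBpsd : ∀ h : EuclideanSpace ℝ (Fin n), 0 ≤ ⟪h, B h⟫)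
    (t : ℝ) (ht : 0 ≤ t)
    (lam₁ lam₂ : ℝ) (hlam₁ : 0 < lam₁) (hlam₂ : 0 < lam₂)
    (h1 : ∀ h : EuclideanSpace ℝ (Fin n),
      lam₁ * ‖h‖ ^ 2 ≤ (1 / 2) * ⟪h, B h⟫ + t * ‖h‖ ^ 2)
    (h2 : ‖B + t • ContinuousLinearMap.id ℝ (EuclideanSpace ℝ (Fin n))‖ ≤ lam₂)
    (Δ : ℝ) (hΔ : 0 < Δ)
    (p r : EuclideanSpace ℝ (Fin n))
    (hp : B p + t • p = -g + r)
    (hr : ‖r‖ ≤ lam₁ * ‖g‖ / (2 * (lam₁ + lam₂)))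
    (m : EuclideanSpace ℝ (Fin n) → ℝ)
    (hm : ∀ s, m s = ⟪g, s⟫ + (1 / 2) * ⟪s, B s⟫)
    (s : EuclideanSpace ℝ (Fin n)) (hs : s = min Δ ‖p‖ • ‖p‖⁻¹ • p) :
    (lam₁ / (2 * lam₂)) * ‖g‖ *
        min Δ ((lam₁ + 2 * lam₂) / (2 * lam₂ * (lam₁ + lam₂)) * ‖g‖) ≤
      m 0 - m s :=
  regularized_newton_model_decrease_general g B hBpsd t lam₁ lam₂ hlam₁ hlam₂ h1 h2 Δ hΔ p r hp hr m
    hm s hs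
end
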